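/- Let A be a finite polynomial automaton of degree ≤ m (the maximal number of nontrivial simple directed cycles connected by a directed path is at most m+1). Then the number of directed paths of length n in A avoiding the trivial state is bounded by a polynomial in n of degree ≤ m. -/

import Mathlib

/-- A finite invertible automaton over the alphabet `X`. -/
structure Automaton (X : Type*) where
  S : Type*
  [fin : Fintype S]
  trans : S → X → S
  out : S → X → X
  inv : ∀ s : S, Function.Bijective (out s)

attribute [instance] Automaton.fin

namespace Automaton

variable {X : Type*} (A : Automaton X)

/-- A simple directed cycle in (the Moore diagram of) the automaton `A`. -/
def IsCycle (c : List (A.S × X)) : Prop :=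
  c ≠ [] ∧ (c.map Prod.fst).Nodup ∧
    c.Chain' (fun p q => A.trans p.1 p.2 = q.1) ∧
    ∀ h : c ≠ [], A.trans (c.getLast h).1 (c.getLast h).2 = (c.head h).1

/-- The edge relation of the underlying directed graph of `A`. -/
def Edge (s t : A.S) : Prop := ∃ x : X, A.trans s x = t

/-- There is a directed path from (a state of) the cycle `c₁` to (a state of) `c₂`. -/
def ConnectedTo (c₁ c₂ : List (A.S × X)) : Prop :=
  ∃ s t : A.S, s ∈ c₁.map Prod.fst ∧ t ∈ c₂.map Prod.fst ∧
    Relation.ReflTransGen A.Edge s t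

/-- The number of directed paths of length `n` in `A` avoiding the state `e`. -/
noncomputable def pathCount (e : A.S) (n : ℕ) : ℕ :=
  Nat.card {px : (Fin (n + 1) → A.S) × (Fin n → X) //
    (∀ i, px.1 i ≠ e) ∧ ∀ i : Fin n, A.trans (px.1 i.castSucc) (px.2 i) = px.1 i.succ}

end Automaton

/-!
Distinct nontrivial cycles being disjoint, a path leaving a nontrivial cycle through an edge off
it can never return, as it would close a second cycle through the same state. So if the depth of
a state is the length of the longest chain of cycles reachable from it, a path of length `n`
from a cycle state of depth `r + 1` either stays on the cycle or leaves it at some time `k < n`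
into a state of depth `r`. Summing over `k` raises the degree of the bound by one per level.
From depth `0` no cycle is reachable, so paths are shorter than the number of states and their
total number is bounded; depth `m + 1` thus gives degree `m`. Walking through states off the
cycles costs only a constant factor, since each such step strictly shrinks the set of these
states still reachable.
-/

theorem one_add_mul_sum_pow_le (a K r n : ℕ) :
    1 + a * ∑ k ∈ Finset.range n, K * (k + 1) ^ r ≤ (1 + a * K) * (n + 1) ^ (r + 1) := by
  have hsum : ∑ k ∈ Finset.range n, K * (k + 1) ^ r ≤ K * (n + 1) ^ (r + 1) :=
    calc ∑ k ∈ Finset.range n, K * (k + 1) ^ r ≤ ∑ _k ∈ Finset.range n, K * (n + 1) ^ r :=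
          Finset.sum_le_sum fun k hk => by gcongr; exact (Finset.mem_range.mp hk).le
      _ = n * (K * (n + 1) ^ r) := by simp
      _ ≤ K * (n + 1) ^ (r + 1) := by rw [pow_succ]; nlinarith [Nat.zero_le (K * (n + 1) ^ r)]
  calc 1 + a * ∑ k ∈ Finset.range n, K * (k + 1) ^ r
      ≤ (n + 1) ^ (r + 1) + a * (K * (n + 1) ^ (r + 1)) :=
        add_le_add (Nat.one_le_pow _ _ n.succ_pos) (Nat.mul_le_mul_left a hsum)
    _ = (1 + a * K) * (n + 1) ^ (r + 1) := by ring

namespace Automaton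

open Relation Finset

variable {X : Type*} (A : Automaton X) (e : A.S)

/-- Cycles are lists of edges, so two of them are the same cycle when one is a rotation of the
other. -/
def IsPolynomial : Prop :=
  ∀ c₁ c₂ : List (A.S × X), A.IsCycle c₁ → A.IsCycle c₂ →
    e ∉ c₁.map Prod.fst → e ∉ c₂.map Prod.fst →
    (∃ s, s ∈ c₁.map Prod.fst ∧ s ∈ c₂.map Prod.fst) →
    ∃ n : ℕ, c₂ = c₁.rotate n

def OnCycle (s : A.S) : Prop :=
  ∃ c : List (A.S × X), A.IsCycle c ∧ e ∉ c.map Prod.fst ∧ s ∈ c.map Prod.fst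

def IsCycleChain (k : ℕ) (c : ℕ → List (A.S × X)) : Prop :=
  (∀ i < k, A.IsCycle (c i)) ∧ (∀ i < k, e ∉ (c i).map Prod.fst) ∧
    (∀ i < k, ∀ j < k, i ≠ j → ¬∃ n : ℕ, c j = (c i).rotate n) ∧
    (∀ i, i + 1 < k → A.ConnectedTo (c i) (c (i + 1)))

/-- `A` has degree `≤ m` exactly when every state has `CycleDepthLE e s (m + 1)`. -/
def CycleDepthLE (s : A.S) (r : ℕ) : Prop :=
  ∀ k c, A.IsCycleChain e k c →
    (∀ i < k, ∀ v ∈ (c i).map Prod.fst, ReflTransGen A.Edge s v) → k ≤ r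

noncomputable def offCycleReach (s : A.S) : ℕ :=
  {v | ReflTransGen A.Edge s v ∧ ¬A.OnCycle e v}.ncard

noncomputable def pathCountFrom (t : A.S) (n : ℕ) : ℕ :=
  Nat.card {px : (Fin (n + 1) → A.S) × (Fin n → X) //
    px.1 0 = t ∧ (∀ i, px.1 i ≠ e) ∧
      ∀ i : Fin n, A.trans (px.1 i.castSucc) (px.2 i) = px.1 i.succ}

variable {A e}

theorem eq_of_reflTransGen_edge (he : ∀ x, A.trans e x = e) {t : A.S}
    (h : ReflTransGen A.Edge e t) : t = e := by
  induction h with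
  | refl => rfl
  | tail _ hedge ih => obtain ⟨x, rfl⟩ := hedge; rw [ih, he]

theorem IsCycle.reflTransGen {c : List (A.S × X)} (hc : A.IsCycle c) {v w : A.S}
    (hv : v ∈ c.map Prod.fst) (hw : w ∈ c.map Prod.fst) : ReflTransGen A.Edge v w := by
  obtain ⟨hne, -, hchain, hwrap⟩ := hc
  have hchain : c.IsChain (fun p q => A.trans p.1 p.2 = q.1) := hchain
  have to_last : ∀ p ∈ c, ReflTransGen A.Edge p.1 (c.getLast hne).1 :=
    hchain.backwards_induction _ _ (fun p _ hpq h => h.head ⟨p.2, hpq⟩) (fun _ => .refl)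
  have from_last : ∀ q ∈ c, ReflTransGen A.Edge (c.getLast hne).1 q.1 :=
    hchain.induction _ _ (fun p _ hpq h => h.tail ⟨p.2, hpq⟩)
      (fun _ => .single ⟨_, hwrap hne⟩)
  obtain ⟨p, hp, rfl⟩ := List.mem_map.mp hv
  obtain ⟨q, hq, rfl⟩ := List.mem_map.mp hw
  exact (to_last p hp).trans (from_last q hq)

theorem IsCycle.trivial_notMem (he : ∀ x, A.trans e x = e) {c : List (A.S × X)}
    (hc : A.IsCycle c) {s : A.S} (hs : s ∈ c.map Prod.fst) (hse : s ≠ e) :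
    e ∉ c.map Prod.fst :=
  fun hec => hse (eq_of_reflTransGen_edge he (hc.reflTransGen hec hs))

/-- A walk `u ⇝ s` shortened to a path through distinct states, written as its list of edges
and ending with the prescribed edge `(s, x)`. -/
theorem exists_simple_path (x : X) {u s : A.S} (h : ReflTransGen A.Edge u s) :
    ∃ c : List (A.S × X), (c.map Prod.fst).Nodup ∧ c.IsChain (fun p q => A.trans p.1 p.2 = q.1)
      ∧ c.head?.map Prod.fst = some u ∧ c.getLast? = some (s, x) := by
  induction h using ReflTransGen.head_induction_on with
  | refl => exact ⟨[(s, x)], by simp, .singleton _, rfl, rfl⟩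
  | @head a a' hedge _ ih =>
    obtain ⟨c, hnodup, hchain, hhead, hlast⟩ := ih
    by_cases ha : a ∈ c.map Prod.fst
    · obtain ⟨⟨b, z⟩, hmem, rfl⟩ := List.mem_map.mp ha
      obtain ⟨l₁, l₂, rfl⟩ := List.append_of_mem hmem
      refine ⟨(b, z) :: l₂, hnodup.sublist (by simp), hchain.right_of_append, rfl, ?_⟩
      rwa [List.getLast?_append_of_ne_nil _ (List.cons_ne_nil _ _)] at hlast
    · obtain ⟨y, hy⟩ := hedge
      refine ⟨(a, y) :: c, List.nodup_cons.mpr ⟨ha, hnodup⟩, hchain.cons ?_, rfl, ?_⟩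
      · intro q hq
        rw [hy, ← Option.some_inj, ← hhead, hq]
        rfl
      · cases c with
        | nil => simp at hhead
        | cons q c => rwa [List.getLast?_cons_cons]

theorem exists_isCycle_mem {s : A.S} {x : X}
    (h : ReflTransGen A.Edge (A.trans s x) s) : ∃ c, A.IsCycle c ∧ (s, x) ∈ c := by
  obtain ⟨c, hnodup, hchain, hhead, hlast⟩ := exists_simple_path x h
  have hne : c ≠ [] := by rintro rfl; simp at hlast
  have hlast' : c.getLast hne = (s, x) := by
    simpa [List.getLast?_eq_some_getLast hne] using hlast
  have hhead' : (c.head hne).1 = A.trans s x := by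
    simpa [List.head?_eq_some_head hne] using hhead
  exact ⟨c, ⟨hne, hnodup, hchain, fun _ => by rw [hlast', hhead']⟩,
    List.mem_of_getLast? hlast⟩

theorem onCycle_of_reflTransGen (he : ∀ x, A.trans e x = e) {s : A.S} {x : X} (hs : s ≠ e)
    (h : ReflTransGen A.Edge (A.trans s x) s) :
    ∃ c, A.IsCycle c ∧ e ∉ c.map Prod.fst ∧ (s, x) ∈ c := by
  obtain ⟨c, hc, hmem⟩ := exists_isCycle_mem h
  exact ⟨c, hc, hc.trivial_notMem he (List.mem_map_of_mem hmem) hs, hmem⟩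

/-- Returning to `C` would close a second cycle through `s`, which has to be `C` itself. -/
theorem IsPolynomial.not_reflTransGen_of_exit (he : ∀ x, A.trans e x = e)
    (hpoly : A.IsPolynomial e) {C : List (A.S × X)} (hC : A.IsCycle C)
    (heC : e ∉ C.map Prod.fst) {s : A.S} {x₀ x : X} (hx₀ : (s, x₀) ∈ C) (hx : x ≠ x₀)
    {v : A.S} (hv : v ∈ C.map Prod.fst) : ¬ReflTransGen A.Edge (A.trans s x) v := by
  intro hreach
  have hs : s ∈ C.map Prod.fst := List.mem_map_of_mem (f := Prod.fst) hx₀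
  obtain ⟨D, hD, heD, hxD⟩ := onCycle_of_reflTransGen he (fun h => heC (h ▸ hs))
    (hreach.trans (hC.reflTransGen hv hs))
  obtain ⟨n, rfl⟩ := hpoly C D hC hD heC heD ⟨s, hs, List.mem_map_of_mem hxD⟩
  exact hx congr(Prod.snd $(List.inj_on_of_nodup_map hC.2.1 (List.mem_rotate.mp hxD) hx₀ rfl))

theorem CycleDepthLE.of_reflTransGen {s t : A.S} {r : ℕ} (hs : A.CycleDepthLE e s r)
    (h : ReflTransGen A.Edge s t) : A.CycleDepthLE e t r :=
  fun k c hc hreach => hs k c hc fun i hi v hv => h.trans (hreach i hi v hv)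

theorem CycleDepthLE.not_onCycle {s : A.S} (hs : A.CycleDepthLE e s 0) : ¬A.OnCycle e s := by
  rintro ⟨C, hC, heC, hsC⟩
  have := hs 1 (fun _ => C)
    ⟨fun _ _ => hC, fun _ _ => heC, fun i hi j hj hij => by omega, fun i hi => by omega⟩
    fun _ _ v hv => hC.reflTransGen hsC hv
  omega

/-- Prepending `C` to a chain of cycles reachable from the exit target gives a longer chain
reachable from `s`. -/
theorem IsPolynomial.cycleDepthLE_of_exit (he : ∀ x, A.trans e x = e)
    (hpoly : A.IsPolynomial e) {C : List (A.S × X)} (hC : A.IsCycle C)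
    (heC : e ∉ C.map Prod.fst) {s : A.S} {x₀ x : X} (hx₀ : (s, x₀) ∈ C) (hx : x ≠ x₀)
    {r : ℕ} (hs : A.CycleDepthLE e s (r + 1)) : A.CycleDepthLE e (A.trans s x) r := by
  intro k c ⟨hcyc, hnontriv, hdistinct, hconn⟩ hreach
  have hsC : s ∈ C.map Prod.fst := List.mem_map_of_mem (f := Prod.fst) hx₀
  have hstep : ReflTransGen A.Edge s (A.trans s x) := .single ⟨x, rfl⟩
  have hdisjoint : ∀ i < k, ∀ p ∈ c i, p ∉ C := fun i hi p hp hpC =>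
    hpoly.not_reflTransGen_of_exit he hC heC hx₀ hx (List.mem_map_of_mem hpC)
      (hreach i hi p.1 (List.mem_map_of_mem hp))
  let c' : ℕ → List (A.S × X) := fun | 0 => C | i + 1 => c i
  suffices A.IsCycleChain e (k + 1) c' by
    have := hs (k + 1) c' this fun
      | 0, _, v, hv => hC.reflTransGen hsC hv
      | i + 1, hi, v, hv => hstep.trans (hreach i (by omega) v hv)
    omega
  refine ⟨fun | 0, _ => hC | i + 1, hi => hcyc i (by omega),
    fun | 0, _ => heC | i + 1, hi => hnontriv i (by omega), ?_, ?_⟩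
  · rintro (_ | i) hi (_ | j) hj hij ⟨n, hn⟩
    · exact hij rfl
    · have hn : c j = C.rotate n := hn
      obtain ⟨p, hp⟩ := List.exists_mem_of_ne_nil _ (hcyc j (by omega)).1
      exact hdisjoint j (by omega) p hp (List.mem_rotate.mp (hn ▸ hp))
    · have hn : C = (c i).rotate n := hn
      obtain ⟨p, hp⟩ := List.exists_mem_of_ne_nil _ hC.1
      exact hdisjoint i (by omega) p (List.mem_rotate.mp (hn ▸ hp)) hp
    · exact hdistinct i (by omega) j (by omega) (by omega) ⟨n, hn⟩
  · rintro (_ | i) hi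
    · obtain ⟨p, hp⟩ := List.exists_mem_of_ne_nil _ (hcyc 0 (by omega)).1
      exact ⟨s, p.1, hsC, List.mem_map_of_mem hp,
        hstep.trans (hreach 0 (by omega) p.1 (List.mem_map_of_mem hp))⟩
    · exact hconn i (by omega)

theorem offCycleReach_le_of_reflTransGen {s t : A.S} (h : ReflTransGen A.Edge s t) :
    A.offCycleReach e t ≤ A.offCycleReach e s :=
  Set.ncard_le_ncard fun _ hv => ⟨h.trans hv.1, hv.2⟩

theorem offCycleReach_le_card (s : A.S) : A.offCycleReach e s ≤ Fintype.card A.S :=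
  (Set.ncard_le_card _).trans Nat.card_eq_fintype_card.le

theorem offCycleReach_pos {s : A.S} (hs : ¬A.OnCycle e s) : 0 < A.offCycleReach e s :=
  (Set.ncard_pos).mpr ⟨s, .refl, hs⟩

/-- A walk from the successor back to `s` would close a nontrivial cycle through `s`. -/
theorem offCycleReach_trans_lt (he : ∀ x, A.trans e x = e) {s : A.S} (hse : s ≠ e)
    (hs : ¬A.OnCycle e s) (x : X) : A.offCycleReach e (A.trans s x) < A.offCycleReach e s := by
  refine Set.ncard_lt_ncard ⟨fun v hv => ⟨.head ⟨x, rfl⟩ hv.1, hv.2⟩, fun hsub => ?_⟩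
  obtain ⟨c, hc, hec, hmem⟩ := onCycle_of_reflTransGen he hse (hsub ⟨.refl, hs⟩).1
  exact hs ⟨c, hc, hec, List.mem_map_of_mem hmem⟩

theorem pathCountFrom_self (n : ℕ) : A.pathCountFrom e e n = 0 :=
  Nat.card_eq_zero.mpr <| .inl ⟨fun p => p.2.2.1 0 p.2.1⟩

variable [Fintype X]

theorem pathCountFrom_zero_le (t : A.S) : A.pathCountFrom e t 0 ≤ 1 :=
  Finite.card_le_one_iff_subsingleton.mpr ⟨fun p q => Subtype.ext <| Prod.ext
    (funext fun i => by rw [Fin.fin_one_eq_zero i, p.2.1, q.2.1]) (funext fun i => i.elim0)⟩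

theorem pathCountFrom_succ_le (t : A.S) (n : ℕ) :
    A.pathCountFrom e t (n + 1) ≤ ∑ x, A.pathCountFrom e (A.trans t x) n := by
  unfold pathCountFrom
  rw [← Nat.card_sigma]
  refine Nat.card_le_card_of_injective (fun p =>
    ⟨p.1.2 0, (Fin.tail p.1.1, Fin.tail p.1.2), ?_, fun i => p.2.2.1 _, fun i => ?_⟩) ?_
  · simpa [Fin.tail, p.2.1] using (p.2.2.2 0).symm
  · simpa [Fin.tail, ← Fin.succ_castSucc] using p.2.2.2 i.succ
  · intro p q hpq
    have hhead : p.1.2 0 = q.1.2 0 := congr_arg Sigma.fst hpq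
    have htail := congr_arg (fun z => z.2.1) hpq
    simp only [Prod.mk.injEq] at htail
    refine Subtype.ext (Prod.ext ?_ ?_)
    · rw [← Fin.cons_self_tail p.1.1, ← Fin.cons_self_tail q.1.1, p.2.1, q.2.1, htail.1]
    · rw [← Fin.cons_self_tail p.1.2, ← Fin.cons_self_tail q.1.2, hhead, htail.2]

theorem pathCountFrom_le_pow (t : A.S) (n : ℕ) :
    A.pathCountFrom e t n ≤ Fintype.card X ^ n := by
  induction n generalizing t with
  | zero => exact pathCountFrom_zero_le t
  | succ n ih =>
    calc A.pathCountFrom e t (n + 1) ≤ ∑ x, A.pathCountFrom e (A.trans t x) n :=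
          pathCountFrom_succ_le t n
      _ ≤ ∑ _x : X, Fintype.card X ^ n := sum_le_sum fun x _ => ih _
      _ = Fintype.card X ^ (n + 1) := by simp [pow_succ']

theorem pathCount_le_sum_pathCountFrom (n : ℕ) :
    A.pathCount e n ≤ ∑ t, A.pathCountFrom e t n := by
  unfold pathCount pathCountFrom
  rw [← Nat.card_sigma]
  exact Nat.card_le_card_of_injective (fun p => ⟨p.1.1 0, p.1, rfl, p.2⟩) fun p q hpq =>
    Subtype.ext (congr_arg (fun z => z.2.1) hpq)

theorem pathCountFrom_eq_zero_of_cycleDepthLE_zero (he : ∀ x, A.trans e x = e) {s : A.S}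
    (hs : A.CycleDepthLE e s 0) {n : ℕ} (hn : A.offCycleReach e s ≤ n) :
    A.pathCountFrom e s n = 0 := by
  induction n generalizing s with
  | zero => exact absurd hn (offCycleReach_pos hs.not_onCycle).not_ge
  | succ n ih =>
    obtain rfl | hse := eq_or_ne s e
    · exact pathCountFrom_self _
    refine Nat.eq_zero_of_le_zero ((pathCountFrom_succ_le s n).trans_eq ?_)
    refine sum_eq_zero fun x _ => ih (hs.of_reflTransGen (.single ⟨x, rfl⟩)) ?_
    have := offCycleReach_trans_lt he hse hs.not_onCycle x
    omega

theorem pathCountFrom_le_of_cycleDepthLE_zero (he : ∀ x, A.trans e x = e) {s : A.S}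
    (hs : A.CycleDepthLE e s 0) (n : ℕ) :
    A.pathCountFrom e s n ≤ if n < Fintype.card A.S then Fintype.card X ^ n else 0 := by
  split_ifs with hn
  · exact pathCountFrom_le_pow s n
  · exact (pathCountFrom_eq_zero_of_cycleDepthLE_zero he hs
      ((offCycleReach_le_card s).trans (not_lt.mp hn))).le

/-- The sum accounts for the exits from the cycle at times `k < n`, the power of `|X| + 1` for
the steps through states off the cycles. -/
theorem IsPolynomial.pathCountFrom_le_of_cycleDepthLE_succ (he : ∀ x, A.trans e x = e)
    (hpoly : A.IsPolynomial e) {r : ℕ} {D : ℕ → ℕ}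
    (hD : ∀ t, A.CycleDepthLE e t r → ∀ n, A.pathCountFrom e t n ≤ D n) {s : A.S}
    (hs : A.CycleDepthLE e s (r + 1)) (n : ℕ) :
    A.pathCountFrom e s n ≤ (Fintype.card X + 1) ^ A.offCycleReach e s *
      (1 + Fintype.card X * ∑ k ∈ range n, D k) := by
  classical
  set M := Fintype.card X + 1
  set P : ℕ → ℕ := fun n => 1 + Fintype.card X * ∑ k ∈ range n, D k
  have hP : ∀ n, P (n + 1) = P n + Fintype.card X * D n := fun n => by
    simp only [P, sum_range_succ]
    ring
  induction n generalizing s with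
  | zero => simpa [P] using (pathCountFrom_zero_le s).trans (Nat.one_le_pow _ _ (by omega))
  | succ n ih =>
    show _ ≤ M ^ A.offCycleReach e s * P (n + 1)
    obtain rfl | hse := eq_or_ne s e
    · simp [pathCountFrom_self]
    refine (pathCountFrom_succ_le s n).trans ?_
    by_cases hcyc : A.OnCycle e s
    · obtain ⟨C, hC, heC, hsC⟩ := hcyc
      obtain ⟨x₀, hx₀⟩ : ∃ x₀, (s, x₀) ∈ C := by
        obtain ⟨⟨_, x₀⟩, hx₀, rfl⟩ := List.mem_map.mp hsC
        exact ⟨x₀, hx₀⟩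
      have hstep : ReflTransGen A.Edge s (A.trans s x₀) := .single ⟨x₀, rfl⟩
      have hstay := (ih (hs.of_reflTransGen hstep)).trans
        (Nat.mul_le_mul_right (P n) (Nat.pow_le_pow_right (by omega)
          (offCycleReach_le_of_reflTransGen hstep)))
      have hexit : ∑ x ∈ univ.erase x₀, A.pathCountFrom e (A.trans s x) n ≤
          Fintype.card X * D n := by
        refine (sum_le_card_nsmul _ _ _ fun x hx => hD _ ?_ n).trans ?_
        · exact hpoly.cycleDepthLE_of_exit he hC heC hx₀ (ne_of_mem_erase hx) hs
        · exact Nat.mul_le_mul_right _ (card_erase_le.trans_eq card_univ)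
      rw [← add_sum_erase _ _ (mem_univ x₀), hP, mul_add]
      exact add_le_add hstay (hexit.trans (Nat.le_mul_of_pos_left _ (by positivity)))
    · obtain ⟨d, hd⟩ := Nat.exists_eq_add_one.mpr (offCycleReach_pos hcyc)
      have hterm (x : X) : A.pathCountFrom e (A.trans s x) n ≤ M ^ d * P n := by
        have hlt := offCycleReach_trans_lt he hse hcyc x
        exact (ih (hs.of_reflTransGen (.single ⟨x, rfl⟩))).trans
          (Nat.mul_le_mul_right _ (Nat.pow_le_pow_right (by omega) (by omega)))
      calc ∑ x, A.pathCountFrom e (A.trans s x) n ≤ Fintype.card X * (M ^ d * P n) := by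
            simpa using sum_le_card_nsmul univ _ _ fun x _ => hterm x
        _ ≤ M * (M ^ d * P n) := Nat.mul_le_mul_right _ (Nat.le_succ _)
        _ ≤ M ^ (d + 1) * P (n + 1) := by
            rw [← mul_assoc, ← pow_succ', hP]
            exact Nat.mul_le_mul_left _ (Nat.le_add_right _ _)
        _ = M ^ A.offCycleReach e s * P (n + 1) := by rw [hd]

theorem IsPolynomial.exists_pathCountFrom_le (he : ∀ x, A.trans e x = e)
    (hpoly : A.IsPolynomial e) (r : ℕ) :
    ∃ K, ∀ s, A.CycleDepthLE e s (r + 1) →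
      ∀ n, A.pathCountFrom e s n ≤ K * (n + 1) ^ r := by
  set M := Fintype.card X + 1
  have hM : ∀ s, M ^ A.offCycleReach e s ≤ M ^ Fintype.card A.S := fun s =>
    Nat.pow_le_pow_right (by omega) (offCycleReach_le_card s)
  induction r with
  | zero =>
    refine ⟨M ^ Fintype.card A.S * (1 + Fintype.card X *
      ∑ k ∈ range (Fintype.card A.S), Fintype.card X ^ k), fun s hs n => ?_⟩
    refine (hpoly.pathCountFrom_le_of_cycleDepthLE_succ he
      (fun t ht => pathCountFrom_le_of_cycleDepthLE_zero he ht) hs n).trans ?_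
    rw [pow_zero, mul_one, ← sum_filter]
    exact Nat.mul_le_mul (hM s)
      (by gcongr; exact fun k hk => mem_range.mpr (mem_filter.mp hk).2)
  | succ r ih =>
    obtain ⟨K, hK⟩ := ih
    refine ⟨M ^ Fintype.card A.S * (1 + Fintype.card X * K), fun s hs n => ?_⟩
    calc A.pathCountFrom e s n
        ≤ M ^ A.offCycleReach e s * (1 + Fintype.card X * ∑ k ∈ range n, K * (k + 1) ^ r) :=
          hpoly.pathCountFrom_le_of_cycleDepthLE_succ he hK hs n
      _ ≤ M ^ Fintype.card A.S * ((1 + Fintype.card X * K) * (n + 1) ^ (r + 1)) :=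
          Nat.mul_le_mul (hM s) (one_add_mul_sum_pow_le _ _ _ _)
      _ = _ := by ring

end Automaton

theorem stmt8_general {X : Type*} [Fintype X] (A : Automaton X) (e : A.S)
    (he_trans : ∀ x, A.trans e x = e) (m : ℕ)
    (hdisj : ∀ c₁ c₂ : List (A.S × X), A.IsCycle c₁ → A.IsCycle c₂ →
      e ∉ c₁.map Prod.fst → e ∉ c₂.map Prod.fst →
      (∃ s, s ∈ c₁.map Prod.fst ∧ s ∈ c₂.map Prod.fst) →
      ∃ n : ℕ, c₂ = c₁.rotate n)
    (hchain : ∀ (r : ℕ) (c : ℕ → List (A.S × X)),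
      (∀ i < r, A.IsCycle (c i)) →
      (∀ i < r, e ∉ (c i).map Prod.fst) →
      (∀ i < r, ∀ j < r, i ≠ j → ¬∃ n : ℕ, c j = (c i).rotate n) →
      (∀ i, i + 1 < r → A.ConnectedTo (c i) (c (i + 1))) →
      r ≤ m + 1) :
    ∃ C : ℕ, ∀ n, A.pathCount e n ≤ C * (n + 1) ^ m := by
  obtain ⟨K, hK⟩ := Automaton.IsPolynomial.exists_pathCountFrom_le he_trans hdisj m
  have hdepth : ∀ s, A.CycleDepthLE e s (m + 1) := fun s k c hc _ =>
    hchain k c hc.1 hc.2.1 hc.2.2.1 hc.2.2.2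
  refine ⟨Fintype.card A.S * K, fun n => ?_⟩
  calc A.pathCount e n ≤ ∑ s, A.pathCountFrom e s n := A.pathCount_le_sum_pathCountFrom n
    _ ≤ ∑ _s : A.S, K * (n + 1) ^ m := Finset.sum_le_sum fun s _ => hK s (hdepth s) n
    _ = Fintype.card A.S * K * (n + 1) ^ m := by simp [mul_assoc]

/-- If `A` is a finite polynomial automaton of degree `≤ m` (distinct nontrivial simple
directed cycles are disjoint, and at most `m + 1` nontrivial cycles can be connected by
directed paths), then the number of directed paths of length `n` avoiding the trivial
state is bounded by a polynomial in `n` of degree `≤ m`. -/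
theorem stmt8 {X : Type*} [Fintype X] (A : Automaton X) (e : A.S)
    (he_trans : ∀ x, A.trans e x = e) (he_out : ∀ x, A.out e x = x) (m : ℕ)
    (hdisj : ∀ c₁ c₂ : List (A.S × X), A.IsCycle c₁ → A.IsCycle c₂ →
      e ∉ c₁.map Prod.fst → e ∉ c₂.map Prod.fst →
      (∃ s, s ∈ c₁.map Prod.fst ∧ s ∈ c₂.map Prod.fst) →
      ∃ n : ℕ, c₂ = c₁.rotate n)
    (hchain : ∀ (r : ℕ) (c : ℕ → List (A.S × X)),
      (∀ i < r, A.IsCycle (c i)) →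
      (∀ i < r, e ∉ (c i).map Prod.fst) →
      (∀ i < r, ∀ j < r, i ≠ j → ¬∃ n : ℕ, c j = (c i).rotate n) →
      (∀ i, i + 1 < r → A.ConnectedTo (c i) (c (i + 1))) →
      r ≤ m + 1) :
    ∃ C : ℕ, ∀ n, A.pathCount e n ≤ C * (n + 1) ^ m :=
  stmt8_general A e he_trans m hdisj hchain
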